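/- arXiv:math/0611537 — 3 statements merged into one kernel-verified Lean document; each statement's English description precedes it below -/
import Mathlib

section
/- Let X = (X_1, …, X_{2p}) be a centered Gaussian vector in ℝ^{2p}. Then E[X_1 X_2 ⋯ X_{2p}] = Σ_{σ ∈ Σ(2p)} Π_{i=1}^p E[X_{σ(2i−1)} X_{σ(2i)}] up to the appropriate combinatorial normalization (Wick/Isserlis formula: the sum over pairings of {1,…,2p} of products of pairwise covariances). -/
/-!
Polarization: averaging `(∏ ε i) * (∑ ε i * x i) ^ n` over all signs `ε ∈ {±1}ⁿ` kills every
monomial except `x 1 ⋯ x n`, leaving `2ⁿ n! ∏ x i`. Each `∑ ε i * X i` is a centered Gaussian,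
so its `2p`-th moment is `(2p)! / (2ᵖ p!)` times the `p`-th power of its variance
`∑ ε i ε j E[X i X j]`. Averaging once more against `∏ ε i` keeps exactly those terms of that
`p`-th power in which every index occurs once, i.e. the pairings. The Gaussian moments come from
the integration by parts identity `x φ = -v φ'` for the density `φ` of `N(0, v)`.
-/

open MeasureTheory ProbabilityTheory Real Finset
open scoped NNReal

section GaussianMoments
variable {μ : ℝ} {v : ℝ≥0}

lemma integrable_pow_gaussianReal (m : ℕ) : Integrable (fun x => x ^ m) (gaussianReal μ v) :=
  (integrable_norm_iff (by fun_prop)).1 <| by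
    simpa [norm_pow] using (memLp_id_gaussianReal (μ := μ) (v := v) m).integrable_norm_pow'

lemma integrable_gaussianPDFReal_smul {E : Type*} [NormedAddCommGroup E] [NormedSpace ℝ E]
    {f : ℝ → E} (hv : v ≠ 0) (hf : Integrable f (gaussianReal μ v)) :
    Integrable (fun x => gaussianPDFReal μ v x • f x) := by
  rw [gaussianReal_of_var_ne_zero _ hv, integrable_withDensity_iff_integrable_smul'
    (measurable_gaussianPDF μ v) (ae_of_all _ fun _ => gaussianPDF_lt_top)] at hf
  simpa [toReal_gaussianPDF] using hf

lemma hasDerivAt_gaussianPDFReal (x : ℝ) :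
    HasDerivAt (gaussianPDFReal μ v) (-((x - μ) / v) * gaussianPDFReal μ v x) x := by
  have hexponent : HasDerivAt (fun y => -(y - μ) ^ 2 / (2 * v)) (-(2 * (x - μ)) / (2 * v)) x := by
    simpa using (((hasDerivAt_id' x).sub_const μ).pow 2).neg.div_const (2 * (v : ℝ))
  refine (hexponent.exp.const_mul (√(2 * π * v))⁻¹).congr_deriv ?_
  rw [gaussianPDFReal]
  field_simp

lemma integral_pow_add_two_gaussianReal (v : ℝ≥0) (m : ℕ) :
    ∫ x, x ^ (m + 2) ∂gaussianReal 0 v = (m + 1) * v * ∫ x, x ^ m ∂gaussianReal 0 v := by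
  rcases eq_or_ne v 0 with rfl | hv
  · simp
  simp only [integral_gaussianReal_eq_integral_smul hv, smul_eq_mul]
  have hint (k : ℕ) : Integrable fun x => gaussianPDFReal 0 v x * x ^ k :=
    integrable_gaussianPDFReal_smul hv (integrable_pow_gaussianReal k)
  have hderiv (x : ℝ) : HasDerivAt (fun x => x ^ (m + 1) * gaussianPDFReal 0 v x)
      ((m + 1) * (gaussianPDFReal 0 v x * x ^ m)
        - (v : ℝ)⁻¹ * (gaussianPDFReal 0 v x * x ^ (m + 2))) x := by
    refine ((hasDerivAt_pow (m + 1) x).mul (hasDerivAt_gaussianPDFReal x)).congr_deriv ?_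
    push_cast
    ring
  have hzero := integral_eq_zero_of_hasDerivAt_of_integrable hderiv
    (((hint m).const_mul _).sub ((hint (m + 2)).const_mul _))
    (by simpa only [mul_comm] using hint (m + 1))
  rw [integral_sub ((hint m).const_mul _) ((hint (m + 2)).const_mul _), integral_const_mul,
    integral_const_mul] at hzero
  have hv' : (v : ℝ) ≠ 0 := by exact_mod_cast hv
  field_simp at hzero
  linear_combination -hzero

lemma integral_pow_two_mul_gaussianReal (v : ℝ≥0) (p : ℕ) :
    ∫ x, x ^ (2 * p) ∂gaussianReal 0 v = v ^ p * (2 * p).factorial / (2 ^ p * p.factorial) := by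
  induction p with
  | zero => simp
  | succ p ih =>
    rw [mul_add_one, integral_pow_add_two_gaussianReal, ih]
    push_cast [Nat.factorial_succ, mul_add_one]
    field_simp
    ring

end GaussianMoments

section QuadraticForm
variable {Ω : Type*} [MeasurableSpace Ω] {P : Measure Ω}

lemma integral_sum_mul_sq {ι : Type*} [Fintype ι] (c : ι → ℝ) (X : ι → Ω → ℝ)
    (hX : ∀ i j, Integrable (fun ω => X i ω * X j ω) P) :
    ∫ ω, (∑ i, c i * X i ω) ^ 2 ∂P = ∑ i, ∑ j, c i * c j * ∫ ω, X i ω * X j ω ∂P := by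
  have hexpand (ω : Ω) : (∑ i, c i * X i ω) ^ 2 = ∑ i, ∑ j, c i * c j * (X i ω * X j ω) := by
    rw [sq, Finset.sum_mul_sum]
    exact Finset.sum_congr rfl fun i _ => Finset.sum_congr rfl fun j _ => by ring
  simp_rw [hexpand]
  rw [integral_finsetSum _ fun i _ => integrable_finsetSum _ fun j _ => (hX i j).const_mul _]
  refine Finset.sum_congr rfl fun i _ => ?_
  rw [integral_finsetSum _ fun j _ => (hX i j).const_mul _]
  simp_rw [integral_const_mul]

end QuadraticForm

namespace ProbabilityTheory.HasLaw
variable {Ω : Type*} [MeasurableSpace Ω] {P : Measure Ω} {Y : Ω → ℝ} {μ : ℝ} {v : ℝ≥0}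

lemma integrable_pow_of_gaussianReal (hY : HasLaw Y (gaussianReal μ v) P) (m : ℕ) :
    Integrable (fun ω => Y ω ^ m) P := by
  have h := integrable_pow_gaussianReal (μ := μ) (v := v) m
  rw [← hY.map_eq, integrable_map_measure (by fun_prop) hY.aemeasurable] at h
  exact h

lemma integral_pow_two_mul_of_gaussianReal (hY : HasLaw Y (gaussianReal 0 v) P) (p : ℕ) :
    ∫ ω, Y ω ^ (2 * p) ∂P = (∫ ω, Y ω ^ 2 ∂P) ^ p * (2 * p).factorial / (2 ^ p * p.factorial) := by
  have hmoment (k : ℕ) : ∫ ω, Y ω ^ k ∂P = ∫ x, x ^ k ∂gaussianReal 0 v :=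
    hY.integral_comp (f := fun x => x ^ k) (by fun_prop)
  have hvar : ∫ x, x ^ 2 ∂gaussianReal 0 v = v := by
    simpa using integral_pow_two_mul_gaussianReal v 1
  rw [hmoment, hmoment, hvar, integral_pow_two_mul_gaussianReal]

end ProbabilityTheory.HasLaw

def boolSign (b : Bool) : ℝ := cond b 1 (-1)

lemma sum_boolSign_pow (m : ℕ) : ∑ b, boolSign b ^ m = if Even m then 2 else 0 := by
  rcases Nat.even_or_odd m with h | h
  · simp [boolSign, h, h.neg_one_pow, one_add_one_eq_two]
  · simp [boolSign, h.neg_one_pow, Nat.not_even_iff_odd.2 h]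

section Fibers
variable {T ι : Type*} [Fintype T] [Fintype ι] [DecidableEq ι]

lemma bijective_iff_forall_odd_card_fiber (F : T → ι) (hcard : Fintype.card T = Fintype.card ι) :
    Function.Bijective F ↔ ∀ i, Odd #{t | F t = i} := by
  refine ⟨fun hF i => ?_, fun hodd => ?_⟩
  · obtain ⟨t, rfl⟩ := hF.2 i
    have : ({s | F s = F t} : Finset T) = {t} := by
      ext s; simp [hF.1.eq_iff]
    simp [this]
  · refine (Fintype.bijective_iff_surjective_and_card F).2 ⟨fun i => ?_, hcard⟩
    obtain ⟨t, ht⟩ := Finset.card_pos.1 (hodd i).pos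
    exact ⟨t, (Finset.mem_filter.1 ht).2⟩

lemma sum_prod_boolSign_mul_prod_comp (F : T → ι) (hcard : Fintype.card T = Fintype.card ι) :
    ∑ ε : ι → Bool, (∏ i, boolSign (ε i)) * ∏ t, boolSign (ε (F t))
      = if Function.Bijective F then 2 ^ Fintype.card ι else 0 := by
  have hfiber (ε : ι → Bool) : (∏ i, boolSign (ε i)) * ∏ t, boolSign (ε (F t))
      = ∏ i, boolSign (ε i) ^ (#{t | F t = i} + 1) := by
    rw [← Finset.prod_fiberwise' univ F fun i => boolSign (ε i), ← Finset.prod_mul_distrib]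
    simp_rw [Finset.prod_const, ← pow_succ']
  simp_rw [hfiber]
  rw [← Fintype.prod_sum fun i b => boolSign b ^ (#{t | F t = i} + 1)]
  simp_rw [sum_boolSign_pow, Nat.even_add_one, Nat.not_even_iff_odd]
  simp only [Fintype.prod_ite_zero, ← bijective_iff_forall_odd_card_fiber F hcard,
    Finset.prod_const, Finset.card_univ]

end Fibers

def finPairEquiv (p : ℕ) : Fin p × Fin 2 ≃ Fin (2 * p) :=
  finProdFinEquiv.trans (finCongr (mul_comm p 2))

lemma finPairEquiv_apply_zero {p : ℕ} (k : Fin p) :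
    finPairEquiv p (k, 0) = ⟨2 * k, by omega⟩ := by
  ext; simp [finPairEquiv]

lemma finPairEquiv_apply_one {p : ℕ} (k : Fin p) :
    finPairEquiv p (k, 1) = ⟨2 * k + 1, by omega⟩ := by
  ext; simp [finPairEquiv, add_comm]

lemma Fin.prod_two_mul {M : Type*} [CommMonoid M] {p : ℕ} (h : Fin (2 * p) → M) :
    ∏ m, h m = ∏ k : Fin p, h ⟨2 * k, by omega⟩ * h ⟨2 * k + 1, by omega⟩ := by
  rw [← (finPairEquiv p).prod_comp, Fintype.prod_prod_type]
  simp [Fin.prod_univ_two, finPairEquiv_apply_zero, finPairEquiv_apply_one]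

lemma pow_sum_sum_eq_sum_prod {ι R : Type*} [Fintype ι] [CommSemiring R] (b : ι → ι → R) (p : ℕ) :
    (∑ i, ∑ j, b i j) ^ p
      = ∑ f : Fin (2 * p) → ι, ∏ k : Fin p, b (f ⟨2 * k, by omega⟩) (f ⟨2 * k + 1, by omega⟩) := by
  let e : (Fin (2 * p) → ι) ≃ (Fin p → ι × ι) :=
    ((finPairEquiv p).arrowCongr (Equiv.refl ι)).symm.trans <|
      (Equiv.curry _ _ _).trans <| Equiv.arrowCongr (Equiv.refl _) (piFinTwoEquiv fun _ => ι)
  rw [← Fintype.sum_prod_type', Fintype.sum_pow]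
  refine (Fintype.sum_equiv e _ _ fun f => ?_).symm
  simp [e, finPairEquiv_apply_zero, finPairEquiv_apply_one]

section Polarization
variable {ι : Type*} [Fintype ι] [DecidableEq ι]

lemma sum_bijective_eq_sum_perm {M : Type*} [AddCommMonoid M] (w : (ι → ι) → M) :
    ∑ f : ι → ι, (if Function.Bijective f then w f else 0) = ∑ σ : Equiv.Perm ι, w σ := by
  rw [← Finset.sum_filter, ← Finset.sum_subtype_eq_sum_filter, Finset.subtype_univ]
  exact Fintype.sum_equiv Equiv.bijectiveEquiv (fun f => w f) (fun σ => w σ) fun _ => rfl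

lemma sum_prod_boolSign_mul_sum_prod_comp (w : (ι → ι) → ℝ) :
    ∑ ε : ι → Bool, (∏ i, boolSign (ε i)) * ∑ f : ι → ι, (∏ j, boolSign (ε (f j))) * w f
      = 2 ^ Fintype.card ι * ∑ σ : Equiv.Perm ι, w σ := by
  simp_rw [Finset.mul_sum, ← mul_assoc]
  rw [Finset.sum_comm]
  simp_rw [← Finset.sum_mul, sum_prod_boolSign_mul_prod_comp _ rfl, ite_mul, zero_mul,
    sum_bijective_eq_sum_perm]

lemma sum_prod_boolSign_mul_pow_sum (x : ι → ℝ) :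
    ∑ ε : ι → Bool, (∏ i, boolSign (ε i)) * (∑ i, boolSign (ε i) * x i) ^ Fintype.card ι
      = 2 ^ Fintype.card ι * (Fintype.card ι).factorial * ∏ i, x i := by
  have hexpand (ε : ι → Bool) : (∑ i, boolSign (ε i) * x i) ^ Fintype.card ι
      = ∑ f : ι → ι, (∏ j, boolSign (ε (f j))) * ∏ j, x (f j) := by
    rw [← Finset.card_univ, ← Finset.prod_const, Fintype.prod_sum]
    simp_rw [Finset.prod_mul_distrib]
  simp_rw [hexpand, sum_prod_boolSign_mul_sum_prod_comp, Equiv.prod_comp, Finset.sum_const,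
    Finset.card_univ, Fintype.card_perm, nsmul_eq_mul, mul_assoc]

end Polarization

lemma sum_prod_boolSign_mul_pow_quadratic (p : ℕ) (a : Fin (2 * p) → Fin (2 * p) → ℝ) :
    ∑ ε : Fin (2 * p) → Bool, (∏ i, boolSign (ε i)) *
        (∑ i, ∑ j, boolSign (ε i) * boolSign (ε j) * a i j) ^ p
      = 2 ^ (2 * p) * ∑ σ : Equiv.Perm (Fin (2 * p)), ∏ k : Fin p,
          a (σ ⟨2 * k, by omega⟩) (σ ⟨2 * k + 1, by omega⟩) := by
  have hexpand (ε : Fin (2 * p) → Bool) :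
      (∑ i, ∑ j, boolSign (ε i) * boolSign (ε j) * a i j) ^ p
        = ∑ f : Fin (2 * p) → Fin (2 * p), (∏ m, boolSign (ε (f m))) *
            ∏ k : Fin p, a (f ⟨2 * k, by omega⟩) (f ⟨2 * k + 1, by omega⟩) := by
    simp_rw [pow_sum_sum_eq_sum_prod, Fin.prod_two_mul, ← Finset.prod_mul_distrib]
  simp_rw [hexpand, sum_prod_boolSign_mul_sum_prod_comp, Fintype.card_fin]

/-- Isserlis/Wick theorem: for a centered Gaussian vector `X = (X_1, …, X_{2p})`,
`E[X_1 ⋯ X_{2p}]` equals the sum over pairings of products of pairwise covariances, written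
as a normalized sum over all permutations:
`E[∏ X_i] = (2^p p!)⁻¹ ∑_{σ ∈ Σ(2p)} ∏_{i=1}^p E[X_{σ(2i−1)} X_{σ(2i)}]`. -/
theorem isserlis_wick {Ω : Type*} [MeasurableSpace Ω] (μ : Measure Ω) (p : ℕ)
    (X : Fin (2 * p) → Ω → ℝ)
    (hGauss : ∀ c : Fin (2 * p) → ℝ, ∃ v : NNReal,
      Measure.map (fun ω => ∑ i, c i * X i ω) μ = gaussianReal 0 v)
    (hint2 : ∀ i j, Integrable (fun ω => X i ω * X j ω) μ) :
    ∫ ω, ∏ i, X i ω ∂μ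
      = ((2 ^ p * Nat.factorial p : ℝ))⁻¹ *
        ∑ σ : Equiv.Perm (Fin (2 * p)), ∏ i : Fin p,
          ∫ ω, X (σ ⟨2 * i.val, by have := i.isLt; omega⟩) ω *
               X (σ ⟨2 * i.val + 1, by have := i.isLt; omega⟩) ω ∂μ := by
  let S (ε : Fin (2 * p) → Bool) (ω : Ω) : ℝ := ∑ i, boolSign (ε i) * X i ω
  choose v hv using hGauss
  have hlaw (ε : Fin (2 * p) → Bool) :
      HasLaw (S ε) (gaussianReal 0 (v fun i => boolSign (ε i))) μ :=
    ⟨.of_map_ne_zero (hv _ ▸ IsProbabilityMeasure.ne_zero _), hv _⟩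
  have hmoment (ε : Fin (2 * p) → Bool) : ∫ ω, S ε ω ^ (2 * p) ∂μ
      = (∑ i, ∑ j, boolSign (ε i) * boolSign (ε j) * ∫ ω, X i ω * X j ω ∂μ) ^ p
          * (2 * p).factorial / (2 ^ p * p.factorial) := by
    rw [(hlaw ε).integral_pow_two_mul_of_gaussianReal, integral_sum_mul_sq _ _ hint2]
  have hpolar (ω : Ω) : ∏ i, X i ω = (2 ^ (2 * p) * (2 * p).factorial : ℝ)⁻¹ *
      ∑ ε, (∏ i, boolSign (ε i)) * S ε ω ^ (2 * p) := by
    have h := sum_prod_boolSign_mul_pow_sum fun i => X i ω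
    rw [Fintype.card_fin] at h
    rw [h]
    field_simp
  have hint (ε : Fin (2 * p) → Bool) : Integrable (fun ω => S ε ω ^ (2 * p)) μ :=
    (hlaw ε).integrable_pow_of_gaussianReal _
  calc ∫ ω, ∏ i, X i ω ∂μ
      = (2 ^ (2 * p) * (2 * p).factorial : ℝ)⁻¹ *
          ∑ ε, (∏ i, boolSign (ε i)) * ∫ ω, S ε ω ^ (2 * p) ∂μ := by
        simp_rw [hpolar, integral_const_mul]
        rw [integral_finsetSum _ fun ε _ => (hint ε).const_mul _]
        simp_rw [integral_const_mul]
    _ = _ := by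
        simp_rw [hmoment, ← mul_div_assoc, ← mul_assoc, ← Finset.sum_div, ← Finset.sum_mul,
          sum_prod_boolSign_mul_pow_quadratic]
        field_simp
end

section
/- Let M be a continuous martingale with quadratic variation f, and let g be an adapted, continuous, increasing process with g(0) = 0. Define h(t) = f(t) + inf_{s ≤ t}(g(s) − f(s)). Then h is increasing, h ≤ g almost surely, and 0 ≤ h(t) − h(s) ≤ f(t) − f(s) for all t ≥ s. -/
open MeasureTheory Set

/-!
Pathwise, write `m t = inf_{a ≤ s ≤ t} (g s - f s)`, so that `h = f + m`. The running infimum `m`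
is antitone, which bounds the increments of `h` above by those of `f`; and since `g` is
increasing, `g u - f u ≥ g s - f t` for `s ≤ u ≤ t`, so `m` drops by at most `f t - f s` between
`s` and `t`, which makes `h` increasing.
-/

section RunningInf

variable {f g : ℝ → ℝ} {a s t : ℝ}

theorem bddBelow_image_sub_Icc_of_monotone (hf : Monotone f) (hg : Monotone g) (a b : ℝ) :
    BddBelow ((fun u => g u - f u) '' Icc a b) := by
  refine ⟨g a - f b, ?_⟩
  rintro _ ⟨u, hu, rfl⟩
  linarith [hg hu.1, hf hu.2]

theorem sInf_image_sub_Icc_anti (hf : Monotone f) (hg : Monotone g) (hs : a ≤ s)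
    (hst : s ≤ t) :
    sInf ((fun u => g u - f u) '' Icc a t) ≤ sInf ((fun u => g u - f u) '' Icc a s) :=
  csInf_le_csInf (bddBelow_image_sub_Icc_of_monotone hf hg a t)
    ((nonempty_Icc.2 hs).image _) (image_mono (Icc_subset_Icc_right hst))

theorem sInf_image_sub_Icc_le_add (hf : Monotone f) (hg : Monotone g) (hs : a ≤ s)
    (hst : s ≤ t) :
    sInf ((fun u => g u - f u) '' Icc a s) ≤
      sInf ((fun u => g u - f u) '' Icc a t) + (f t - f s) := by
  have hle : ∀ u ∈ Icc a s, sInf ((fun u => g u - f u) '' Icc a s) ≤ g u - f u := fun u hu =>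
    csInf_le (bddBelow_image_sub_Icc_of_monotone hf hg a s) (mem_image_of_mem _ hu)
  rw [← sub_le_iff_le_add]
  refine le_csInf ((nonempty_Icc.2 (hs.trans hst)).image _) ?_
  rintro _ ⟨u, hu, rfl⟩
  rcases le_total u s with hus | hsu
  · linarith [hle u ⟨hu.1, hus⟩, hf hst]
  · linarith [hle s ⟨hs, le_rfl⟩, hg hsu, hf hu.2]

theorem add_sInf_image_sub_Icc_le (hf : Monotone f) (hg : Monotone g) (ht : a ≤ t) :
    f t + sInf ((fun u => g u - f u) '' Icc a t) ≤ g t := by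
  have := csInf_le (bddBelow_image_sub_Icc_of_monotone hf hg a t)
    (mem_image_of_mem (fun u => g u - f u) (right_mem_Icc.2 ht))
  linarith

theorem add_sInf_image_sub_Icc_increment_bounds (hf : Monotone f) (hg : Monotone g)
    (hs : a ≤ s) (hst : s ≤ t) :
    0 ≤ (f t + sInf ((fun u => g u - f u) '' Icc a t)) -
        (f s + sInf ((fun u => g u - f u) '' Icc a s)) ∧
      (f t + sInf ((fun u => g u - f u) '' Icc a t)) -
        (f s + sInf ((fun u => g u - f u) '' Icc a s)) ≤ f t - f s :=
  ⟨by linarith [sInf_image_sub_Icc_le_add hf hg hs hst],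
    by linarith [sInf_image_sub_Icc_anti hf hg hs hst]⟩

end RunningInf

theorem coupling_time_change_properties_general {Ω : Type*}
    (f g : ℝ → Ω → ℝ)
    (hfm : ∀ ω, Monotone fun t => f t ω) (hgm : ∀ ω, Monotone fun t => g t ω)
    (h : ℝ → Ω → ℝ)
    (hh : ∀ t ω, h t ω = f t ω + sInf ((fun s => g s ω - f s ω) '' Set.Icc 0 t)) :
    ∀ ω, (∀ t : ℝ, 0 ≤ t → h t ω ≤ g t ω) ∧
      (∀ s t : ℝ, 0 ≤ s → s ≤ t →
        0 ≤ h t ω - h s ω ∧ h t ω - h s ω ≤ f t ω - f s ω) := by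
  intro ω
  refine ⟨fun t ht => ?_, fun s t hs hst => ?_⟩
  · rw [hh]
    exact add_sInf_image_sub_Icc_le (hfm ω) (hgm ω) ht
  · rw [hh, hh]
    exact add_sInf_image_sub_Icc_increment_bounds (hfm ω) (hgm ω) hs hst

/-- Let `M` be a continuous martingale with (continuous, increasing, adapted) quadratic
variation `f`, and `g` an adapted continuous increasing process with `g(0) = 0`. With
`h(t) = f(t) + inf_{s ≤ t}(g(s) − f(s))`, the process `h` is increasing, `h ≤ g`, and
`0 ≤ h(t) − h(s) ≤ f(t) − f(s)` for `s ≤ t`. -/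
theorem coupling_time_change_properties {Ω : Type*} [m : MeasurableSpace Ω]
    (μ : Measure Ω) [IsProbabilityMeasure μ] (ℱ : Filtration ℝ m)
    (M : ℝ → Ω → ℝ) (hM : Martingale M ℱ μ) (hMc : ∀ ω, Continuous fun t => M t ω)
    (f g : ℝ → Ω → ℝ)
    (hfa : Adapted ℱ f) (hga : Adapted ℱ g)
    (hfc : ∀ ω, Continuous fun t => f t ω) (hgc : ∀ ω, Continuous fun t => g t ω)
    (hfm : ∀ ω, Monotone fun t => f t ω) (hgm : ∀ ω, Monotone fun t => g t ω)
    (hf0 : ∀ ω, f 0 ω = 0) (hg0 : ∀ ω, g 0 ω = 0)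
    (h : ℝ → Ω → ℝ)
    (hh : ∀ t ω, h t ω = f t ω + sInf ((fun s => g s ω - f s ω) '' Set.Icc 0 t)) :
    ∀ ω, (∀ t : ℝ, 0 ≤ t → h t ω ≤ g t ω) ∧
      (∀ s t : ℝ, 0 ≤ s → s ≤ t →
        0 ≤ h t ω - h s ω ∧ h t ω - h s ω ≤ f t ω - f s ω) :=
  coupling_time_change_properties_general f g hfm hgm h hh
end

section
/- Let f, g : [0,T] → ℝ be continuous with f(0) = g(0) = 0, f nondecreasing, g nondecreasing, and define h(t) = f(t) + inf_{s ≤ t}(g(s) − f(s)). Then for all t ∈ [0,T], 0 ≤ f(t) − h(t) ≤ sup_{s ≤ t}(f(s) − g(s))_+ and h(t) ≤ g(t). -/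
/-- Pathwise core of the martingale coupling construction: for continuous nondecreasing
`f, g : [0,T] → ℝ` vanishing at `0` and `h(t) = f(t) + inf_{s ≤ t}(g(s) − f(s))`, one has
`0 ≤ f(t) − h(t) ≤ sup_{s ≤ t}(f(s) − g(s))_+` and `h(t) ≤ g(t)` for all `t ∈ [0,T]`. -/
theorem pathwise_coupling_bounds (T : ℝ) (hT : 0 < T) (f g : ℝ → ℝ)
    (hfc : ContinuousOn f (Set.Icc 0 T)) (hgc : ContinuousOn g (Set.Icc 0 T))
    (hfm : MonotoneOn f (Set.Icc 0 T)) (hgm : MonotoneOn g (Set.Icc 0 T))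
    (hf0 : f 0 = 0) (hg0 : g 0 = 0)
    (h : ℝ → ℝ) (hh : ∀ t, h t = f t + sInf ((fun s => g s - f s) '' Set.Icc 0 t)) :
    ∀ t ∈ Set.Icc (0 : ℝ) T,
      0 ≤ f t - h t ∧
      f t - h t ≤ sSup ((fun s => max (f s - g s) 0) '' Set.Icc 0 t) ∧
      h t ≤ g t := by
  intro t ht
  obtain ⟨ht0, htT⟩ := ht
  have hsub : Set.Icc (0:ℝ) t ⊆ Set.Icc 0 T := Set.Icc_subset_Icc le_rfl htT
  have hne : (Set.Icc (0:ℝ) t).Nonempty := ⟨0, le_rfl, ht0⟩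
  have hcont : ContinuousOn (fun s => g s - f s) (Set.Icc 0 t) := (hgc.sub hfc).mono hsub
  have hK : IsCompact ((fun s => g s - f s) '' Set.Icc 0 t) :=
    (isCompact_Icc).image_of_continuousOn hcont
  have hbdd : BddBelow ((fun s => g s - f s) '' Set.Icc 0 t) := hK.bddBelow
  have hmem0 : (0:ℝ) ∈ (fun s => g s - f s) '' Set.Icc 0 t :=
    ⟨0, ⟨le_rfl, ht0⟩, by simp [hf0, hg0]⟩
  have hinf_le0 : sInf ((fun s => g s - f s) '' Set.Icc 0 t) ≤ 0 := csInf_le hbdd hmem0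
  have hmem : sInf ((fun s => g s - f s) '' Set.Icc 0 t) ∈ (fun s => g s - f s) '' Set.Icc 0 t :=
    hK.sInf_mem (hne.image _)
  obtain ⟨s0, hs00, hs0eq⟩ := hmem
  have hcont2 : ContinuousOn (fun s => max (f s - g s) 0) (Set.Icc 0 t) :=
    ContinuousOn.sup ((hfc.sub hgc).mono hsub) continuousOn_const
  have hK2 : IsCompact ((fun s => max (f s - g s) 0) '' Set.Icc 0 t) :=
    (isCompact_Icc).image_of_continuousOn hcont2
  have hbdd2 : BddAbove ((fun s => max (f s - g s) 0) '' Set.Icc 0 t) := hK2.bddAbove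
  have hle : max (f s0 - g s0) 0 ≤ sSup ((fun s => max (f s - g s) 0) '' Set.Icc 0 t) :=
    le_csSup hbdd2 ⟨s0, hs00, rfl⟩
  have hmax : f s0 - g s0 ≤ max (f s0 - g s0) 0 := le_max_left _ _
  have htmem : g t - f t ∈ (fun s => g s - f s) '' Set.Icc 0 t := ⟨t, ⟨ht0, le_rfl⟩, rfl⟩
  have hinf_le_t : sInf ((fun s => g s - f s) '' Set.Icc 0 t) ≤ g t - f t := csInf_le hbdd htmem
  refine ⟨by rw [hh]; linarith, by rw [hh]; simp only at hs0eq; linarith, by rw [hh]; linarith⟩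
end
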